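/- arXiv:1901.06001 — 2 statements merged into one kernel-verified Lean document; each statement's English description precedes it below -/
import Mathlib

section
/- Angular momentum obstruction at the constraint set: fix α > 2 and ω > 0. If (x, ẋ) is a state of the N-body problem with center of mass zero satisfying K_ω(x) = 0 and |A(x,ẋ)| ≥ ω I(x), then E(x,ẋ) ≥ E*(ω). Consequently, along any solution with energy E < E*(ω), at any time t₁ with K_ω(x(t₁)) = 0 one has |A| < ω I(x(t₁)). (Key inequality from rotating coordinates: for any state with angular momentum aligned with the z-axis, E(x,ẋ) = −(ω²/2)∑_i m_i(x_{i1}² + x_{i2}²) + U(x) + ω(A(x,ẋ))₃ + (1/2)∑_i m_i |ẋ̃_i|², where ẋ̃ is the velocity in the frame rotating with frequency ω.) -/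
/- STATEMENT 13: angular momentum obstruction at the constraint set: if K_ω(x) = 0 and
|A(x,ẋ)| ≥ ω I(x) then E(x,ẋ) ≥ E*(ω); consequently a state with energy below E*(ω)
and K_ω(x) = 0 must have |A| < ω I(x). -/

namespace NBodyPaper

open Real

noncomputable section

abbrev E3 := EuclideanSpace ℝ (Fin 3)

variable {N : ℕ}

/-- The α-homogeneous potential `U(x) = -∑_{i<j} m_i m_j / |x_i - x_j|^α`. -/
def pot (α : ℝ) (m : Fin N → ℝ) (q : Fin N → E3) : ℝ :=
  -∑ i : Fin N, ∑ j ∈ Finset.univ.filter (fun j => i < j), m i * m j / ‖q i - q j‖ ^ α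

/-- Moment of inertia `I(x) = ∑ m_i |x_i|²`. -/
def inertia (m : Fin N → ℝ) (q : Fin N → E3) : ℝ := ∑ i, m i * ‖q i‖ ^ 2

/-- Collision-free configuration. -/
def OffDiag (q : Fin N → E3) : Prop := ∀ i j, i ≠ j → q i ≠ q j

/-- Center of mass at the origin. -/
def comZero (m : Fin N → ℝ) (q : Fin N → E3) : Prop := ∑ i, m i • q i = 0

/-- The threshold function `K_ω(x) = ω² I(x) + α U(x)`. -/
def Kfun (α : ℝ) (m : Fin N → ℝ) (ω : ℝ) (q : Fin N → E3) : ℝ :=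
  ω ^ 2 * inertia m q + α * pot α m q

/-- `E_ω(x) = (ω²/2) I(x) + U(x)`. -/
def Eomega (α : ℝ) (m : Fin N → ℝ) (ω : ℝ) (q : Fin N → E3) : ℝ :=
  ω ^ 2 / 2 * inertia m q + pot α m q

/-- The excited energy `E*(ω) = inf { E_ω(x) : K_ω(x) = 0 }`, the infimum taken over
collision-free configurations with center of mass zero. -/
def Estar (α : ℝ) (m : Fin N → ℝ) (ω : ℝ) : ℝ :=
  sInf {e : ℝ | ∃ q : Fin N → E3, OffDiag q ∧ comZero m q ∧ Kfun α m ω q = 0 ∧ e = Eomega α m ω q}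

def kinetic (m : Fin N → ℝ) (v : Fin N → E3) : ℝ := (1 / 2) * ∑ i, m i * ‖v i‖ ^ 2

/-- Total energy `E(x, ẋ)`. -/
def energy (α : ℝ) (m : Fin N → ℝ) (q v : Fin N → E3) : ℝ := kinetic m v + pot α m q

/-- The cross product on `ℝ³`. -/
def cross3 (a b : E3) : E3 :=
  (WithLp.equiv 2 (Fin 3 → ℝ)).symm
    (crossProduct ((WithLp.equiv 2 (Fin 3 → ℝ)) a) ((WithLp.equiv 2 (Fin 3 → ℝ)) b))

/-- The angular momentum `A(x, ẋ) = ∑ m_i x_i × ẋ_i`. -/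
def angMom (m : Fin N → ℝ) (q v : Fin N → E3) : E3 := ∑ i, m i • cross3 (q i) (v i)


lemma norm_cross3_le (a b : E3) : ‖cross3 a b‖ ≤ ‖a‖ * ‖b‖ := by
  have hsq : ‖cross3 a b‖ ^ 2 ≤ (‖a‖ * ‖b‖) ^ 2 := by
    have h1 : ‖cross3 a b‖ ^ 2 = ∑ i : Fin 3, (cross3 a b) i ^ 2 := by
      rw [EuclideanSpace.norm_eq, Real.sq_sqrt (by positivity)]
      simp [sq_abs]
    have h2 : ‖a‖ ^ 2 = ∑ i : Fin 3, a i ^ 2 := by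
      rw [EuclideanSpace.norm_eq, Real.sq_sqrt (by positivity)]
      simp [sq_abs]
    have h3 : ‖b‖ ^ 2 = ∑ i : Fin 3, b i ^ 2 := by
      rw [EuclideanSpace.norm_eq, Real.sq_sqrt (by positivity)]
      simp [sq_abs]
    have hc : ∀ i, (cross3 a b) i = (crossProduct (fun j => a j) (fun j => b j)) i := fun i => rfl
    rw [mul_pow, h1, h2, h3]
    simp only [hc, crossProduct, LinearMap.mk₂_apply, Fin.sum_univ_three]
    simp only [Matrix.cons_val_zero, Matrix.cons_val_one, Matrix.head_cons,
      Matrix.cons_val_two, Matrix.tail_cons]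
    nlinarith [sq_nonneg (a 0 * b 0 + a 1 * b 1 + a 2 * b 2)]
  calc ‖cross3 a b‖ = √(‖cross3 a b‖ ^ 2) := (Real.sqrt_sq (norm_nonneg _)).symm
    _ ≤ √((‖a‖ * ‖b‖) ^ 2) := Real.sqrt_le_sqrt hsq
    _ = ‖a‖ * ‖b‖ := Real.sqrt_sq (by positivity)

lemma pot_nonpos {N : ℕ} (α : ℝ) (m : Fin N → ℝ) (hm : ∀ i, 0 < m i) (q : Fin N → E3) :
    pot α m q ≤ 0 := by
  unfold pot
  have : (0:ℝ) ≤ ∑ i : Fin N, ∑ j ∈ Finset.univ.filter (fun j => i < j),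
      m i * m j / ‖q i - q j‖ ^ α := by
    apply Finset.sum_nonneg; intro i _
    apply Finset.sum_nonneg; intro j _
    have := (hm i).le; have := (hm j).le
    have : (0:ℝ) ≤ ‖q i - q j‖ ^ α := Real.rpow_nonneg (norm_nonneg _) α
    positivity
  linarith

lemma set_lb {N : ℕ} (α ω : ℝ) (hα : 2 < α) (hω : 0 < ω) (m : Fin N → ℝ)
    (hm : ∀ i, 0 < m i) :
    ∀ e ∈ {e : ℝ | ∃ q : Fin N → E3, OffDiag q ∧ comZero m q ∧ Kfun α m ω q = 0 ∧
      e = Eomega α m ω q}, (0:ℝ) ≤ e := by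
  rintro e ⟨q, -, -, hK, rfl⟩
  have hU : pot α m q ≤ 0 := pot_nonpos α m hm q
  unfold Kfun at hK
  unfold Eomega
  nlinarith

lemma kin_bound {N : ℕ} (α ω : ℝ) (hω : 0 < ω) (m : Fin N → ℝ) (hm : ∀ i, 0 < m i)
    (q v : Fin N → E3) (hA : ω * inertia m q ≤ ‖angMom m q v‖) :
    ω ^ 2 / 2 * inertia m q ≤ kinetic m v := by
  set S₁ : ℝ := ∑ i, m i * (‖q i‖ * ‖v i‖) with hS₁
  have h1 : ‖angMom m q v‖ ≤ S₁ := by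
    calc ‖angMom m q v‖ ≤ ∑ i, ‖m i • cross3 (q i) (v i)‖ := norm_sum_le _ _
      _ ≤ S₁ := by
        apply Finset.sum_le_sum; intro i _
        rw [norm_smul, Real.norm_eq_abs, abs_of_pos (hm i)]
        exact mul_le_mul_of_nonneg_left (norm_cross3_le _ _) (hm i).le
  have hcs : S₁ ^ 2 ≤ inertia m q * (∑ i, m i * ‖v i‖ ^ 2) := by
    have := Finset.sum_mul_sq_le_sq_mul_sq Finset.univ
      (fun i => Real.sqrt (m i) * ‖q i‖) (fun i => Real.sqrt (m i) * ‖v i‖)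
    have e1 : ∀ i : Fin N, (Real.sqrt (m i) * ‖q i‖) * (Real.sqrt (m i) * ‖v i‖)
        = m i * (‖q i‖ * ‖v i‖) := by
      intro i
      rw [mul_mul_mul_comm, Real.mul_self_sqrt (hm i).le]
    have e2 : ∀ i : Fin N, (Real.sqrt (m i) * ‖q i‖) ^ 2 = m i * ‖q i‖ ^ 2 := by
      intro i; rw [mul_pow, Real.sq_sqrt (hm i).le]
    have e3 : ∀ i : Fin N, (Real.sqrt (m i) * ‖v i‖) ^ 2 = m i * ‖v i‖ ^ 2 := by
      intro i; rw [mul_pow, Real.sq_sqrt (hm i).le]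
    simp only [e1, e2, e3] at this
    exact this
  have hI : 0 ≤ inertia m q := by
    apply Finset.sum_nonneg; intro i _; exact mul_nonneg (hm i).le (sq_nonneg _)
  have hS2 : 0 ≤ ∑ i, m i * ‖v i‖ ^ 2 := by
    apply Finset.sum_nonneg; intro i _; exact mul_nonneg (hm i).le (sq_nonneg _)
  unfold kinetic
  rcases eq_or_lt_of_le hI with hI0 | hIpos
  · rw [← hI0]; linarith
  · have hS1pos : 0 ≤ S₁ := le_trans (le_trans (by positivity) hA) h1
    have h4 : (ω * inertia m q) * (ω * inertia m q) ≤ S₁ * S₁ :=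
      mul_self_le_mul_self (by positivity) (le_trans hA h1)
    have h5 : inertia m q * (ω ^ 2 * inertia m q) ≤
        inertia m q * (∑ i, m i * ‖v i‖ ^ 2) := by nlinarith [h4, hcs]
    have h6 := (mul_le_mul_iff_right₀ hIpos).mp h5
    linarith


lemma obstruction_first {N : ℕ} (α ω : ℝ) (hα : 2 < α) (hω : 0 < ω)
    (m : Fin N → ℝ) (hm : ∀ i, 0 < m i) (q v : Fin N → E3)
    (hod : OffDiag q) (hcom : comZero m q) (hK : Kfun α m ω q = 0)
    (hA : ω * inertia m q ≤ ‖angMom m q v‖) : Estar α m ω ≤ energy α m q v := by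
  have hmem : Eomega α m ω q ∈ {e : ℝ | ∃ q' : Fin N → E3, OffDiag q' ∧ comZero m q' ∧
      Kfun α m ω q' = 0 ∧ e = Eomega α m ω q'} := ⟨q, hod, hcom, hK, rfl⟩
  have h1 : Estar α m ω ≤ Eomega α m ω q :=
    csInf_le ⟨0, set_lb α ω hα hω m hm⟩ hmem
  have h2 : Eomega α m ω q ≤ energy α m q v := by
    have := kin_bound α ω hω m hm q v hA
    unfold Eomega energy
    linarith
  linarith

/-- **Angular momentum obstruction at the constraint set** (`α > 2`, `ω > 0`). -/
theorem angular_momentum_obstruction {N : ℕ} (α ω : ℝ) (hα : 2 < α) (hω : 0 < ω)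
    (m : Fin N → ℝ) (hm : ∀ i, 0 < m i) :
    (∀ (q v : Fin N → E3), OffDiag q → comZero m q → Kfun α m ω q = 0 →
      ω * inertia m q ≤ ‖angMom m q v‖ → Estar α m ω ≤ energy α m q v) ∧
    (∀ (q v : Fin N → E3), OffDiag q → comZero m q → energy α m q v < Estar α m ω →
      Kfun α m ω q = 0 → ‖angMom m q v‖ < ω * inertia m q) := by
  constructor
  · intro q v hod hcom hK hA
    exact obstruction_first α ω hα hω m hm q v hod hcom hK hA
  · intro q v hod hcom hE hK
    by_contra hcon
    push_neg at hcon
    have := obstruction_first α ω hα hω m hm q v hod hcom hK hcon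
    linarith

end
end NBodyPaper
end

section
/- The set K₁⁺ is empty: fix α > 2 and ω > 0. There is no state (x, ẋ) of the N-body problem with center of mass zero satisfying simultaneously E(x,ẋ) < E*(ω), A(x,ẋ) ≠ 0, |A(x,ẋ)| ≥ ω I(x), and K_ω(x) ≥ 0. -/
/- STATEMENT 14: the set K₁⁺ is empty: no state with center of mass zero can satisfy
E < E*(ω), A ≠ 0, |A| ≥ ω I(x), and K_ω(x) ≥ 0 simultaneously (α > 2, ω > 0). -/

namespace NBodyPaper

open Real

noncomputable section

variable {N : ℕ}

lemma cross3_zero_left (b : E3) : cross3 0 b = 0 := by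
  simp [cross3, cross_apply]

lemma inertia_nonneg (m : Fin N → ℝ) (hm : ∀ i, 0 < m i) (q : Fin N → E3) :
    0 ≤ inertia m q :=
  Finset.sum_nonneg fun i _ => mul_nonneg (hm i).le (sq_nonneg _)

lemma pot_neg {α : ℝ} (hα : 0 < α) {m : Fin N → ℝ} (hm : ∀ i, 0 < m i)
    {q : Fin N → E3} (hoff : OffDiag q) {p r : Fin N} (hpr : p < r) :
    pot α m q < 0 := by
  have hterm : ∀ i j : Fin N, i ≠ j → 0 < m i * m j / ‖q i - q j‖ ^ α := by
    intro i j hij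
    have : 0 < ‖q i - q j‖ := by
      rw [norm_pos_iff, sub_ne_zero]; exact hoff i j hij
    exact div_pos (mul_pos (hm i) (hm j)) (Real.rpow_pos_of_pos this α)
  have : 0 < ∑ i : Fin N, ∑ j ∈ Finset.univ.filter (fun j => i < j),
      m i * m j / ‖q i - q j‖ ^ α := by
    apply Finset.sum_pos'
    · intro i _
      exact Finset.sum_nonneg fun j hj => by
        have := hterm i j (Finset.mem_filter.1 hj).2.ne
        linarith
    · refine ⟨p, Finset.mem_univ p, Finset.sum_pos' (fun j hj => ?_) ⟨r, ?_, ?_⟩⟩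
      · exact (hterm p j (Finset.mem_filter.1 hj).2.ne).le
      · exact Finset.mem_filter.2 ⟨Finset.mem_univ r, hpr⟩
      · exact hterm p r hpr.ne
  simp only [pot]; linarith

lemma inertia_smul (m : Fin N → ℝ) (q : Fin N → E3) {c : ℝ} (hc : 0 < c) :
    inertia m (fun i => c • q i) = c ^ 2 * inertia m q := by
  simp only [inertia, Finset.mul_sum]
  refine Finset.sum_congr rfl fun i _ => ?_
  rw [norm_smul, Real.norm_eq_abs, abs_of_pos hc, mul_pow]; ring

lemma pot_smul (α : ℝ) (m : Fin N → ℝ) (q : Fin N → E3) {c : ℝ} (hc : 0 < c) :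
    pot α m (fun i => c • q i) = c ^ (-α) * pot α m q := by
  simp only [pot, mul_neg, neg_inj, Finset.mul_sum]
  refine Finset.sum_congr rfl fun i _ => Finset.sum_congr rfl fun j _ => ?_
  rw [← smul_sub, norm_smul, Real.norm_eq_abs, abs_of_pos hc,
    Real.mul_rpow hc.le (norm_nonneg _), Real.rpow_neg hc.le,
    div_eq_mul_inv, div_eq_mul_inv, mul_inv]
  ring

/-- **`K₁⁺` is empty** (`α > 2`, `ω > 0`). -/
theorem K1plus_empty {N : ℕ} (α ω : ℝ) (hα : 2 < α) (hω : 0 < ω)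
    (m : Fin N → ℝ) (hm : ∀ i, 0 < m i) :
    ¬ ∃ (q v : Fin N → E3), OffDiag q ∧ comZero m q ∧
        energy α m q v < Estar α m ω ∧ angMom m q v ≠ 0 ∧
        ω * inertia m q ≤ ‖angMom m q v‖ ∧ 0 ≤ Kfun α m ω q := by
  rintro ⟨q, v, hoff, hcom, hE, hA, hωI, hK⟩
  have hα0 : (0:ℝ) < α := by linarith
  -- I > 0
  have hI0 : 0 ≤ inertia m q := inertia_nonneg m hm q
  have hIpos : 0 < inertia m q := by
    rcases hI0.lt_or_eq with h | h
    · exact h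
    · exfalso
      have hq0 : ∀ i, q i = 0 := by
        intro i
        have := (Finset.sum_eq_zero_iff_of_nonneg
          (fun j _ => mul_nonneg (hm j).le (sq_nonneg _))).1 h.symm i (Finset.mem_univ i)
        have hn : ‖q i‖ ^ 2 = 0 := by
          rcases mul_eq_zero.1 this with h' | h'
          · exact absurd h' (hm i).ne'
          · exact h'
        simpa [pow_eq_zero_iff] using hn
      apply hA
      simp only [angMom]
      refine Finset.sum_eq_zero fun i _ => ?_
      rw [hq0 i, cross3_zero_left, smul_zero]
  -- get a pair of distinct indices
  obtain ⟨i, hqi⟩ : ∃ i, q i ≠ 0 := by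
    by_contra h; push_neg at h
    have : inertia m q = 0 := Finset.sum_eq_zero fun i _ => by simp [h i]
    linarith
  obtain ⟨j, hji⟩ : ∃ j, j ≠ i := by
    by_contra h; push_neg at h
    have huniv : (Finset.univ : Finset (Fin N)) = {i} := by
      ext k; simp [h k]
    have := hcom
    rw [comZero, huniv, Finset.sum_singleton] at this
    exact hqi (by simpa [(hm i).ne'] using smul_eq_zero.1 this)
  obtain ⟨p, r, hpr⟩ : ∃ p r : Fin N, p < r := by
    rcases hji.lt_or_gt with h | h
    · exact ⟨j, i, h⟩
    · exact ⟨i, j, h⟩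
  have hU : pot α m q < 0 := pot_neg hα0 hm hoff hpr
  set U := pot α m q with hUdef
  set I := inertia m q with hIdef
  -- kinetic energy bound
  have hT : ω ^ 2 * I ≤ 2 * kinetic m v := by
    have hAle : ‖angMom m q v‖ ≤ ∑ i, m i * (‖q i‖ * ‖v i‖) := by
      refine (norm_sum_le _ _).trans (Finset.sum_le_sum fun i _ => ?_)
      rw [norm_smul, Real.norm_eq_abs, abs_of_pos (hm i)]
      exact mul_le_mul_of_nonneg_left (norm_cross3_le _ _) (hm i).le
    have hCS : (∑ i, m i * (‖q i‖ * ‖v i‖)) ^ 2 ≤ I * ∑ i, m i * ‖v i‖ ^ 2 := by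
      have := Finset.sum_mul_sq_le_sq_mul_sq Finset.univ
        (fun i => Real.sqrt (m i) * ‖q i‖) (fun i => Real.sqrt (m i) * ‖v i‖)
      have e1 : ∀ i : Fin N, (Real.sqrt (m i) * ‖q i‖) * (Real.sqrt (m i) * ‖v i‖)
          = m i * (‖q i‖ * ‖v i‖) := by
        intro i
        rw [show (Real.sqrt (m i) * ‖q i‖) * (Real.sqrt (m i) * ‖v i‖)
          = (Real.sqrt (m i) * Real.sqrt (m i)) * (‖q i‖ * ‖v i‖) by ring,
          Real.mul_self_sqrt (hm i).le]
      have e2 : ∀ (w : Fin N → E3) (i : Fin N),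
          (Real.sqrt (m i) * ‖w i‖) ^ 2 = m i * ‖w i‖ ^ 2 := by
        intro w i
        rw [mul_pow, Real.sq_sqrt (hm i).le]
      calc (∑ i, m i * (‖q i‖ * ‖v i‖)) ^ 2
          = (∑ i, (Real.sqrt (m i) * ‖q i‖) * (Real.sqrt (m i) * ‖v i‖)) ^ 2 := by
            rw [Finset.sum_congr rfl fun i _ => (e1 i).symm]
        _ ≤ (∑ i, (Real.sqrt (m i) * ‖q i‖) ^ 2) * ∑ i, (Real.sqrt (m i) * ‖v i‖) ^ 2 := this
        _ = I * ∑ i, m i * ‖v i‖ ^ 2 := by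
            rw [Finset.sum_congr rfl fun i _ => e2 q i, Finset.sum_congr rfl fun i _ => e2 v i]
            rfl
  -- combine: (ω I)² ≤ ‖A‖² ≤ (∑)² ≤ I (∑ m ‖v‖²) = I * 2T
    have h2T : ∑ i, m i * ‖v i‖ ^ 2 = 2 * kinetic m v := by
      simp [kinetic]
    have hA2 : (ω * I) ^ 2 ≤ I * (2 * kinetic m v) := by
      have h1 : (ω * I) ^ 2 ≤ ‖angMom m q v‖ ^ 2 := by
        apply pow_le_pow_left₀ (by positivity) hωI
      have h2 : ‖angMom m q v‖ ^ 2 ≤ (∑ i, m i * (‖q i‖ * ‖v i‖)) ^ 2 :=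
        pow_le_pow_left₀ (norm_nonneg _) hAle 2
      calc (ω * I) ^ 2 ≤ (∑ i, m i * (‖q i‖ * ‖v i‖)) ^ 2 := h1.trans h2
        _ ≤ I * ∑ i, m i * ‖v i‖ ^ 2 := hCS
        _ = I * (2 * kinetic m v) := by rw [h2T]
    have := (mul_le_mul_iff_right₀ hIpos).1 (by nlinarith : I * (ω ^ 2 * I) ≤ I * (2 * kinetic m v))
    linarith
  have hEomega_le : Eomega α m ω q ≤ energy α m q v := by
    simp only [Eomega, energy]
    linarith
  -- scaling
  set b := (-(α * U)) / (ω ^ 2 * I) with hbdef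
  have hbpos : 0 < b := by
    apply div_pos (by nlinarith) (by positivity)
  have hb1 : b ≤ 1 := by
    rw [div_le_one (by positivity)]
    have := hK
    simp only [Kfun, ← hUdef, ← hIdef] at this
    linarith
  set c := b ^ ((2 + α)⁻¹) with hcdef
  have hcpos : 0 < c := Real.rpow_pos_of_pos hbpos _
  have hc1 : c ≤ 1 := Real.rpow_le_one hbpos.le hb1 (by positivity)
  have hcb : c ^ (2 + α) = b := by
    rw [hcdef, ← Real.rpow_mul hbpos.le, inv_mul_cancel₀ (by positivity : (2:ℝ) + α ≠ 0),
      Real.rpow_one]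
  set q' : Fin N → E3 := fun i => c • q i with hq'def
  have hoff' : OffDiag q' := by
    intro a b' hab heq
    exact hoff a b' hab (smul_right_injective _ hcpos.ne' heq)
  have hcom' : comZero m q' := by
    simp only [comZero, hq'def, smul_comm _ c, ← Finset.smul_sum]
    rw [hcom]; simp
  have hIq' : inertia m q' = c ^ 2 * I := inertia_smul m q hcpos
  have hUq' : pot α m q' = c ^ (-α) * U := pot_smul α m q hcpos
  have hbI : ω ^ 2 * I * b = -(α * U) := by
    rw [hbdef]; field_simp
  have hc2 : (c : ℝ) ^ 2 = b * c ^ (-α) := by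
    have h1 : c ^ ((2:ℝ)) = c ^ (2 + α) * c ^ (-α) := by
      rw [← Real.rpow_add hcpos]; norm_num
    rw [← Real.rpow_two, h1, hcb]
  have hK' : Kfun α m ω q' = 0 := by
    rw [Kfun, hIq', hUq', hc2]
    linear_combination c ^ (-α) * hbI
  have hEom' : Eomega α m ω q' ≤ Eomega α m ω q := by
    rw [Eomega, Eomega, hIq', hUq', ← hIdef, ← hUdef]
    have h1 : c ^ 2 ≤ 1 := pow_le_one₀ hcpos.le hc1
    have h2 : (1:ℝ) ≤ c ^ (-α) :=
      Real.one_le_rpow_of_pos_of_le_one_of_nonpos hcpos hc1 (by linarith)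
    have h3 : c ^ (-α) * U ≤ U := by nlinarith
    have h4 : ω ^ 2 / 2 * (c ^ 2 * I) ≤ ω ^ 2 / 2 * I :=
      mul_le_mul_of_nonneg_left
        (by nlinarith [mul_le_mul_of_nonneg_right h1 hI0] : c ^ 2 * I ≤ I) (by positivity)
    linarith
  have hEstar_le : Estar α m ω ≤ Eomega α m ω q' := by
    apply csInf_le
    · refine ⟨0, fun e he => ?_⟩
      obtain ⟨q'', h1, h2, h3, rfl⟩ := he
      have hI'' : 0 ≤ inertia m q'' := inertia_nonneg m hm q''
      rw [Kfun] at h3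
      have hP : pot α m q'' = -(ω ^ 2 * inertia m q'') / α := by
        field_simp
        linarith [h3]
      rw [Eomega, hP]
      have hx : ω ^ 2 / 2 * inertia m q'' + -(ω ^ 2 * inertia m q'') / α
          = (ω ^ 2 * inertia m q'') * ((α - 2) / (2 * α)) := by
        field_simp
        ring
      rw [hx]
      exact mul_nonneg (mul_nonneg (sq_nonneg ω) hI'')
        (div_nonneg (by linarith) (by linarith))
    · exact ⟨q', hoff', hcom', hK', rfl⟩
  linarith


end
end NBodyPaper
end
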